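/- For each n ≥ 1, the total number of leaves over all rooted plane trees with n vertices equals the coefficient of z^n in (z/2)(1 + 1/√(1-4z)), which equals (1/2)·binom(2n-2, n-1) for n ≥ 2 and equals 1 for n = 1. -/

import Mathlib

/-- Rooted plane (ordered) trees: a root together with a (possibly empty) list of subtrees. -/
inductive PlaneTree : Type
  | node : List PlaneTree → PlaneTree

/-- Number of vertices of a rooted plane tree. -/
def PlaneTree.size : PlaneTree → ℕ
  | .node cs => 1 + (cs.attach.map (fun t => PlaneTree.size t.1)).sum
decreasing_by
  have := List.sizeOf_lt_of_mem t.2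
  simp [PlaneTree.node.sizeOf_spec] at *
  omega

/-- The protection number of a rooted plane tree: `0` if the root is a leaf, otherwise
`1` plus the minimum of the protection numbers of the root's subtrees. -/
def PlaneTree.protectionNumber : PlaneTree → ℕ
  | .node [] => 0
  | .node (c :: cs) =>
      1 + List.foldl min (PlaneTree.protectionNumber c)
            (cs.attach.map (fun t => PlaneTree.protectionNumber t.1))
decreasing_by
  · simp; omega
  · have := List.sizeOf_lt_of_mem t.2
    simp at *
    omega

/-- Number of leaves of a rooted plane tree. -/
def PlaneTree.leafCount : PlaneTree → ℕ
  | .node [] => 1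
  | .node (c :: cs) =>
      ((c :: cs).attach.map (fun t => PlaneTree.leafCount t.1)).sum
decreasing_by
  have := List.sizeOf_lt_of_mem t.2
  simp at *
  omega

/-!
Detaching the first subtree of the root turns a tree with `n + 2` vertices into a pair of trees
with `i + 1` and `j + 1` vertices, `i + j = n`. The leaves of the two parts add up, except that
the root becomes a new leaf when the detached subtree was its only child. So the number `C n` of
trees with `n + 1` vertices satisfies the Catalan recurrence, and the leaf totals `ℓ n` over trees
with `n` vertices satisfy `ℓ (n + 2) + C n = 2 ∑_{i + j = n} C i ℓ (j + 1)`. Since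
`binom(2i, i) = (i + 1) C i`, the solution is `2 ℓ (n + 1) = binom(2n, n)` for `n ≥ 1`, and the
generating function follows from the binomial series `∑ binom(2n, n) zⁿ = (1 - 4z)^(-1/2)`.
-/

open Finset Nat

theorem ascPochhammer_eval_half_mul_four_pow {K : Type*} [Field K] [CharZero K] (n : ℕ) :
    (ascPochhammer K n).eval (1 / 2) * 4 ^ n = n ! * centralBinom n := by
  induction n with
  | zero => simp
  | succ n ih =>
    have h : ((n + 1 : ℕ) : K) * centralBinom (n + 1) = 2 * (2 * n + 1) * centralBinom n := by
      exact_mod_cast succ_mul_centralBinom_succ n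
    rw [ascPochhammer_succ_eval, pow_succ, factorial_succ]
    push_cast at h ⊢
    linear_combination (4 * (n : K) + 2) * ih - (n ! : K) * h

theorem choose_half_add_sub_one_mul_four_pow {K : Type*} [Field K] [CharZero K] (n : ℕ) :
    Ring.choose ((1 / 2 : K) + n - 1) n * 4 ^ n = centralBinom n := by
  have h := Ring.factorial_nsmul_multichoose_eq_ascPochhammer (1 / 2 : K) n
  rw [Polynomial.ascPochhammer_smeval_eq_eval, nsmul_eq_mul, Ring.multichoose_eq] at h
  have := ascPochhammer_eval_half_mul_four_pow (K := K) n
  rw [← h, mul_assoc] at this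
  exact mul_left_cancel₀ (Nat.cast_ne_zero.2 n.factorial_ne_zero) this

theorem hasSum_centralBinom_mul_pow {z : ℝ} (hz : |z| < 1 / 4) :
    HasSum (fun n ↦ (centralBinom n : ℝ) * z ^ n) (1 / √(1 - 4 * z)) := by
  have hball : 4 * z ∈ Metric.eball (0 : ℝ) 1 := by
    rw [← ENNReal.coe_one, Metric.eball_coe, mem_ball_zero_iff, norm_mul, Real.norm_eq_abs,
      Real.norm_eq_abs]
    norm_num
    linarith
  have h := (Real.one_div_one_sub_rpow_hasFPowerSeriesOnBall_zero (1 / 2)).hasSum hball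
  simp only [FormalMultilinearSeries.ofScalars_apply_eq, zero_add, smul_eq_mul] at h
  rw [Real.sqrt_eq_rpow]
  refine h.congr_fun fun n ↦ ?_
  rw [← choose_half_add_sub_one_mul_four_pow, mul_pow]; ring

theorem sum_antidiagonal_ite_snd_eq_zero {M : Type*} [AddCommMonoid M] (n : ℕ) (f : ℕ × ℕ → M) :
    ∑ p ∈ antidiagonal n, (if p.2 = 0 then f p else 0) = f (n, 0) := by
  rw [sum_eq_single (n, 0) (fun p hp hne ↦ ?_) (by simp)]
  · simp
  · rw [HasAntidiagonal.mem_antidiagonal] at hp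
    have : p.2 ≠ 0 := fun h ↦ hne (Prod.ext (by omega) h)
    simp [this]

theorem two_mul_sum_catalan_mul_centralBinom (n : ℕ) :
    2 * ∑ p ∈ antidiagonal n, catalan p.1 * centralBinom p.2 = centralBinom (n + 1) := by
  have hweights : ∀ p ∈ antidiagonal n, catalan p.1 * ((p.2 + 1) * catalan p.2) +
      catalan p.2 * ((p.1 + 1) * catalan p.1) = (n + 2) * (catalan p.1 * catalan p.2) := by
    intro p hp
    rw [HasAntidiagonal.mem_antidiagonal] at hp
    rw [← hp]
    ring
  simp only [← succ_mul_catalan_eq_centralBinom]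
  rw [two_mul]
  nth_rewrite 2 [← Nat.sum_antidiagonal_swap]
  rw [← sum_add_distrib]
  simp only [Prod.fst_swap, Prod.snd_swap]
  rw [sum_congr rfl hweights, ← mul_sum, ← catalan_succ']

namespace PlaneTree

open scoped Classical

@[simp]
theorem size_node (l : List PlaneTree) : (node l).size = 1 + (l.map size).sum := by
  rw [size, List.attach_map_val]

@[simp]
theorem leafCount_node_cons (c : PlaneTree) (cs : List PlaneTree) :
    (node (c :: cs)).leafCount = ((c :: cs).map leafCount).sum := by
  rw [leafCount, List.attach_map_val]

theorem size_pos (t : PlaneTree) : 0 < t.size := by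
  cases t; simp

theorem size_eq_one_iff {t : PlaneTree} : t.size = 1 ↔ t = node [] := by
  refine ⟨fun h ↦ ?_, by rintro rfl; simp⟩
  obtain ⟨_ | ⟨c, cs⟩⟩ := t
  · rfl
  · have := size_pos c
    simp at h
    omega

def graft (c d : PlaneTree) : PlaneTree :=
  match d with
  | node ds => node (c :: ds)

theorem graft_injective2 : Function.Injective2 graft := by
  rintro c c' ⟨ds⟩ ⟨ds'⟩ h
  simp only [graft, node.injEq, List.cons.injEq] at h
  exact ⟨h.1, h.2 ▸ rfl⟩

@[simp]
theorem size_graft (c d : PlaneTree) : (graft c d).size = c.size + d.size := by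
  obtain ⟨ds⟩ := d
  simp [graft]
  ring

theorem leafCount_graft_add (c d : PlaneTree) :
    (graft c d).leafCount + (if d = node [] then 1 else 0) = c.leafCount + d.leafCount := by
  obtain ⟨_ | ⟨e, es⟩⟩ := d
  · simp [graft, leafCount]
  · simp [graft]

theorem exists_graft_eq {t : PlaneTree} (h : t ≠ node []) : ∃ c d, graft c d = t := by
  obtain ⟨_ | ⟨c, cs⟩⟩ := t
  · exact absurd rfl h
  · exact ⟨c, node cs, rfl⟩

noncomputable def treesOfSize : ℕ → Finset PlaneTree
  | 0 => ∅
  | 1 => {node []}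
  | n + 2 => (antidiagonal n).attach.biUnion fun p ↦
      (treesOfSize (p.1.1 + 1) ×ˢ treesOfSize (p.1.2 + 1)).image (Function.uncurry graft)
decreasing_by all_goals have := mem_antidiagonal.1 p.2; omega

theorem mem_treesOfSize {n : ℕ} {t : PlaneTree} : t ∈ treesOfSize n ↔ t.size = n := by
  induction n using Nat.strong_induction_on generalizing t with
  | _ n ih =>
    match n with
    | 0 => simp only [treesOfSize, notMem_empty, false_iff]; exact (size_pos t).ne'
    | 1 => simp [treesOfSize, size_eq_one_iff]
    | n + 2 =>
      simp only [treesOfSize, mem_biUnion, mem_attach, true_and, mem_image, mem_product,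
        Subtype.exists, HasAntidiagonal.mem_antidiagonal, Prod.exists, Function.uncurry_apply_pair]
      constructor
      · rintro ⟨i, j, hij, c, d, ⟨hc, hd⟩, rfl⟩
        rw [ih (i + 1) (by omega)] at hc
        rw [ih (j + 1) (by omega)] at hd
        simp only [size_graft]
        omega
      · intro ht
        obtain ⟨c, d, rfl⟩ := exists_graft_eq (t := t) (by rintro rfl; simp at ht)
        have := size_pos c
        have := size_pos d
        simp only [size_graft] at ht
        refine ⟨c.size - 1, d.size - 1, by omega, c, d, ⟨?_, ?_⟩, rfl⟩
        · rw [ih (c.size - 1 + 1) (by omega)]; omega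
        · rw [ih (d.size - 1 + 1) (by omega)]; omega

theorem sum_treesOfSize_add_two {M : Type*} [AddCommMonoid M] (f : PlaneTree → M) (n : ℕ) :
    ∑ t ∈ treesOfSize (n + 2), f t =
      ∑ p ∈ antidiagonal n, ∑ c ∈ treesOfSize (p.1 + 1), ∑ d ∈ treesOfSize (p.2 + 1),
        f (graft c d) := by
  rw [treesOfSize, sum_biUnion]
  · rw [← sum_attach (antidiagonal n)]
    refine sum_congr rfl fun p _ ↦ ?_
    rw [sum_image graft_injective2.uncurry.injOn, sum_product]
    rfl
  · rintro ⟨p, hp⟩ - ⟨q, hq⟩ - hpq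
    refine disjoint_left.2 ?_
    simp only [mem_image, mem_product, Prod.exists, Function.uncurry_apply_pair, mem_treesOfSize]
    rintro _ ⟨c, d, ⟨hc, hd⟩, rfl⟩ ⟨c', d', ⟨hc', hd'⟩, h⟩
    obtain ⟨rfl, rfl⟩ := graft_injective2 h
    rw [HasAntidiagonal.mem_antidiagonal] at hp hq
    obtain rfl : p = q := Prod.ext (by omega) (by omega)
    exact hpq rfl

theorem card_treesOfSize_succ (n : ℕ) : #(treesOfSize (n + 1)) = catalan n := by
  induction n using Nat.strong_induction_on with
  | _ n ih =>
    match n with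
    | 0 => simp [treesOfSize]
    | m + 1 =>
      rw [card_eq_sum_ones, sum_treesOfSize_add_two, catalan_succ']
      refine sum_congr rfl fun p hp ↦ ?_
      rw [HasAntidiagonal.mem_antidiagonal] at hp
      simp only [sum_const, smul_eq_mul, mul_one]
      rw [ih p.1 (by omega), ih p.2 (by omega)]

noncomputable def leafTotal (n : ℕ) : ℕ := ∑ t ∈ treesOfSize n, t.leafCount

theorem leafTotal_zero : leafTotal 0 = 0 := by
  simp [leafTotal, treesOfSize]

theorem leafTotal_one : leafTotal 1 = 1 := by
  simp [leafTotal, treesOfSize, leafCount]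

theorem node_nil_mem_treesOfSize_succ {n : ℕ} : node [] ∈ treesOfSize (n + 1) ↔ n = 0 := by
  simp [mem_treesOfSize]

theorem leafTotal_add_two_add_catalan (n : ℕ) :
    leafTotal (n + 2) + catalan n =
      2 * ∑ p ∈ antidiagonal n, catalan p.1 * leafTotal (p.2 + 1) := by
  have hroot : ∑ p ∈ antidiagonal n, ∑ c ∈ treesOfSize (p.1 + 1), ∑ d ∈ treesOfSize (p.2 + 1),
      (if d = node [] then 1 else 0) = catalan n := by
    simp only [sum_ite_eq', node_nil_mem_treesOfSize_succ, sum_const, card_treesOfSize_succ,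
      smul_eq_mul, mul_ite, mul_one, mul_zero]
    rw [sum_antidiagonal_ite_snd_eq_zero]
  have hsplit : leafTotal (n + 2) + catalan n = ∑ p ∈ antidiagonal n,
      (leafTotal (p.1 + 1) * catalan p.2 + catalan p.1 * leafTotal (p.2 + 1)) := by
    rw [leafTotal, sum_treesOfSize_add_two, ← hroot]
    simp only [← sum_add_distrib, leafCount_graft_add]
    refine sum_congr rfl fun p _ ↦ ?_
    simp only [sum_add_distrib, sum_const, card_treesOfSize_succ, leafTotal, smul_eq_mul, mul_sum,
      mul_comm]
  rw [hsplit, sum_add_distrib, two_mul, ← Nat.sum_antidiagonal_swap]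
  simp only [Prod.fst_swap, Prod.snd_swap, mul_comm]

theorem two_mul_leafTotal_succ (n : ℕ) :
    2 * leafTotal (n + 1) = centralBinom n + if n = 0 then 1 else 0 := by
  induction n using Nat.strong_induction_on with
  | _ n ih =>
    match n with
    | 0 => simp [leafTotal_one]
    | m + 1 =>
      have hrec := leafTotal_add_two_add_catalan m
      have hsum : 2 * ∑ p ∈ antidiagonal m, catalan p.1 * leafTotal (p.2 + 1) =
          ∑ p ∈ antidiagonal m, catalan p.1 * centralBinom p.2 + catalan m := by
        rw [mul_sum, ← sum_antidiagonal_ite_snd_eq_zero m (fun p ↦ catalan p.1), ← sum_add_distrib]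
        refine sum_congr rfl fun p hp ↦ ?_
        rw [HasAntidiagonal.mem_antidiagonal] at hp
        rw [mul_left_comm, ih p.2 (by omega)]
        split_ifs <;> ring
      have := two_mul_sum_catalan_mul_centralBinom m
      rw [if_neg m.succ_ne_zero, add_zero]
      show 2 * leafTotal (m + 2) = centralBinom (m + 1)
      omega

theorem finsum_leafCount_eq_leafTotal (n : ℕ) :
    ∑ᶠ t ∈ {t : PlaneTree | t.size = n}, t.leafCount = leafTotal n := by
  have hset : {t : PlaneTree | t.size = n} = ↑(treesOfSize n) := by
    ext t
    simp [mem_treesOfSize]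
  rw [hset, finsum_mem_coe_finset, leafTotal]

theorem hasSum_leafTotal_mul_pow {z : ℝ} (hz : |z| < 1 / 4) :
    HasSum (fun m ↦ (leafTotal m : ℝ) * z ^ m) (z / 2 * (1 + 1 / √(1 - 4 * z))) := by
  have hshift : HasSum (fun m ↦ (leafTotal (m + 1) : ℝ) * z ^ (m + 1))
      (z / 2 * (1 / √(1 - 4 * z)) + z / 2) := by
    refine (((hasSum_centralBinom_mul_pow hz).mul_left (z / 2)).add
      (hasSum_ite_eq 0 (z / 2))).congr_fun fun m ↦ ?_
    have h : 2 * (leafTotal (m + 1) : ℝ) = centralBinom m + if m = 0 then 1 else 0 := by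
      exact_mod_cast two_mul_leafTotal_succ m
    split_ifs at h ⊢ with hm
    · subst hm
      linear_combination z / 2 * h
    · linear_combination z ^ (m + 1) / 2 * h
  have h := (hasSum_nat_add_iff (f := fun m ↦ (leafTotal m : ℝ) * z ^ m) 1).1 hshift
  simpa [leafTotal_zero, mul_add, add_comm] using h

end PlaneTree

theorem total_leaf_count_general (n : ℕ) :
    (∀ z : ℝ, |z| < 1 / 4 →
      HasSum
        (fun m : ℕ =>
          ((∑ᶠ t ∈ {t : PlaneTree | t.size = m}, t.leafCount : ℕ) : ℝ) * z ^ m)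
        (z / 2 * (1 + 1 / Real.sqrt (1 - 4 * z)))) ∧
    (n = 1 → ∑ᶠ t ∈ {t : PlaneTree | t.size = n}, t.leafCount = 1) ∧
    (2 ≤ n →
      2 * ∑ᶠ t ∈ {t : PlaneTree | t.size = n}, t.leafCount =
        Nat.choose (2 * n - 2) (n - 1)) := by
  simp only [PlaneTree.finsum_leafCount_eq_leafTotal]
  refine ⟨fun z hz ↦ PlaneTree.hasSum_leafTotal_mul_pow hz, fun hn ↦ hn ▸ PlaneTree.leafTotal_one,
    fun hn ↦ ?_⟩
  obtain ⟨m, rfl⟩ := Nat.exists_eq_add_of_le' hn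
  rw [PlaneTree.two_mul_leafTotal_succ, if_neg (by omega), add_zero, centralBinom_eq_two_mul_choose]
  congr 1

/-- The total number of leaves over all rooted plane trees with `n` vertices is the
coefficient of `z^n` in `(z/2)(1 + 1/√(1-4z))`; it equals `(1/2)·binom(2n-2, n-1)` for
`n ≥ 2` and `1` for `n = 1`. -/
theorem total_leaf_count (n : ℕ) (hn : 1 ≤ n) :
    (∀ z : ℝ, |z| < 1 / 4 →
      HasSum
        (fun m : ℕ =>
          ((∑ᶠ t ∈ {t : PlaneTree | t.size = m}, t.leafCount : ℕ) : ℝ) * z ^ m)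
        (z / 2 * (1 + 1 / Real.sqrt (1 - 4 * z)))) ∧
    (n = 1 → ∑ᶠ t ∈ {t : PlaneTree | t.size = n}, t.leafCount = 1) ∧
    (2 ≤ n →
      2 * ∑ᶠ t ∈ {t : PlaneTree | t.size = n}, t.leafCount =
        Nat.choose (2 * n - 2) (n - 1)) :=
  total_leaf_count_general n
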